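/- arXiv:2512.04379 — 4 statements merged into one kernel-verified Lean document; each statement's English description precedes it below -/
import Mathlib

section
/- Let $r>0$ and let $(r_n)$ and $(s_n)$ be real sequences with $s_n>0$ for all $n$, such that the power series $R(x)=\sum_{n=0}^\infty r_n x^n$ and $S(x)=\sum_{n=0}^\infty s_n x^n$ converge for $|x|<r$. If the sequence $(r_n/s_n)$ is non-constant and monotonically increasing, then the function $x \mapsto R(x)/S(x)$ is strictly increasing on $(0,r)$. -/
/-!
For `0 < x < y` the sign of `R(x)/S(x) - R(y)/S(y)` is that of `R(x) S(y) - R(y) S(x)`, which is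
the double series `∑ r_m s_n (x^m y^n - y^m x^n)`. Pairing the `(m, n)` and `(n, m)` terms and
writing `r_n = q_n s_n`, `x = (x / y) y` gives `s_m s_n y^(m+n) (q_m - q_n) ((x/y)^m - (x/y)^n)`,
which is `≤ 0` because `q` increases while `(x/y)^n` decreases, and `< 0` whenever `q_m ≠ q_n`.
-/

theorem summable_norm_mul_pow_of_norm_lt {𝕜 : Type*} [NormedField 𝕜] {a : ℕ → 𝕜} {x t : 𝕜}
    (ht : Summable fun n => a n * t ^ n) (hxt : ‖x‖ < ‖t‖) :
    Summable fun n => ‖a n * x ^ n‖ := by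
  have ht0 : 0 < ‖t‖ := (norm_nonneg x).trans_lt hxt
  obtain ⟨C, hC⟩ := ht.tendsto_atTop_zero.norm.bddAbove_range
  have hgeom : Summable fun n => C * (‖x‖ / ‖t‖) ^ n :=
    (summable_geometric_of_lt_one (by positivity) ((div_lt_one ht0).2 hxt)).mul_left C
  refine hgeom.of_nonneg_of_le (fun n => norm_nonneg _) fun n => ?_
  calc ‖a n * x ^ n‖ = ‖a n * t ^ n‖ * (‖x‖ / ‖t‖) ^ n := by
        rw [norm_mul, norm_mul, norm_pow, norm_pow, div_pow, mul_assoc,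
          mul_div_cancel₀ _ (pow_pos ht0 n).ne']
    _ ≤ C * (‖x‖ / ‖t‖) ^ n := by gcongr; exact hC ⟨n, rfl⟩

theorem summable_norm_mul_pow_of_forall_abs_lt {a : ℕ → ℝ} {r x : ℝ}
    (h : ∀ z : ℝ, |z| < r → Summable fun n => a n * z ^ n) (hx : |x| < r) :
    Summable fun n => ‖a n * x ^ n‖ := by
  obtain ⟨t, hxt, htr⟩ := exists_between hx
  have ht : 0 < t := (abs_nonneg x).trans_lt hxt
  exact summable_norm_mul_pow_of_norm_lt (h t (by rwa [abs_of_pos ht]))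
    (by rwa [Real.norm_eq_abs x, Real.norm_of_nonneg ht.le])

theorem tsum_neg_of_add_swap_neg {α : Type*} {f : α × α → ℝ} (hf : Summable f)
    (hle : ∀ p : α × α, f p + f p.swap ≤ 0) {p₀ : α × α} (hlt : f p₀ + f p₀.swap < 0) :
    ∑' p, f p < 0 := by
  have hswap : ∑' p : α × α, f p.swap = ∑' p, f p := (Equiv.prodComm α α).tsum_eq f
  have hsym : ∑' p : α × α, (f p + f p.swap) < 0 := by
    simpa using Summable.tsum_lt_tsum hle hlt (hf.add hf.prod_symm) summable_zero
  rw [hf.tsum_add hf.prod_symm, hswap] at hsym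
  linarith

theorem Monotone.sub_mul_sub_neg_of_strictAnti {ι R : Type*} [LinearOrder ι] [Ring R]
    [LinearOrder R] [IsStrictOrderedRing R] {f g : ι → R} (hf : Monotone f) (hg : StrictAnti g)
    {i j : ι} (hij : f i ≠ f j) : (f i - f j) * (g i - g j) < 0 := by
  rcases lt_or_gt_of_ne (fun h : i = j => hij (h ▸ rfl)) with h | h
  · exact mul_neg_of_neg_of_pos (sub_neg.2 ((hf h.le).lt_of_ne hij)) (sub_pos.2 (hg h))
  · exact mul_neg_of_pos_of_neg (sub_pos.2 ((hf h.le).lt_of_ne hij.symm)) (sub_neg.2 (hg h))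

theorem tsum_mul_tsum_lt_tsum_mul_tsum {a b : ℕ → ℝ} (hb : ∀ n, 0 < b n)
    (hmono : Monotone fun n => a n / b n) (hnonconst : ∃ m n, a m / b m ≠ a n / b n)
    {x y : ℝ} (hx : 0 < x) (hxy : x < y)
    (hax : Summable fun n => ‖a n * x ^ n‖) (hay : Summable fun n => ‖a n * y ^ n‖)
    (hbx : Summable fun n => ‖b n * x ^ n‖) (hby : Summable fun n => ‖b n * y ^ n‖) :
    (∑' n, a n * x ^ n) * (∑' n, b n * y ^ n) < (∑' n, a n * y ^ n) * (∑' n, b n * x ^ n) := by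
  let F : ℕ × ℕ → ℝ := fun p =>
    a p.1 * x ^ p.1 * (b p.2 * y ^ p.2) - a p.1 * y ^ p.1 * (b p.2 * x ^ p.2)
  have hy : 0 < y := hx.trans hxy
  have hF : Summable F :=
    (summable_mul_of_summable_norm hax hby).sub (summable_mul_of_summable_norm hay hbx)
  have hexpand : (∑' n, a n * x ^ n) * (∑' n, b n * y ^ n)
      - (∑' n, a n * y ^ n) * (∑' n, b n * x ^ n) = ∑' p, F p := by
    rw [tsum_mul_tsum_of_summable_norm hax hby, tsum_mul_tsum_of_summable_norm hay hbx,
      (summable_mul_of_summable_norm hax hby).tsum_sub (summable_mul_of_summable_norm hay hbx)]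
  have hsym : ∀ p : ℕ × ℕ, F p + F p.swap = b p.1 * b p.2 * y ^ (p.1 + p.2) *
      ((a p.1 / b p.1 - a p.2 / b p.2) * ((x / y) ^ p.1 - (x / y) ^ p.2)) := by
    rintro ⟨m, n⟩
    have := (hb m).ne'
    have := (hb n).ne'
    dsimp only [F, Prod.swap]
    rw [div_pow, div_pow, pow_add]
    field_simp
    ring
  have hanti : StrictAnti fun n => (x / y) ^ n := fun m n hmn =>
    pow_lt_pow_right_of_lt_one₀ (div_pos hx hy) ((div_lt_one hy).2 hxy) hmn
  have hcoef : ∀ p : ℕ × ℕ, 0 < b p.1 * b p.2 * y ^ (p.1 + p.2) := fun p =>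
    mul_pos (mul_pos (hb p.1) (hb p.2)) (pow_pos hy _)
  obtain ⟨m, n, hmn⟩ := hnonconst
  refine sub_neg.1 (hexpand ▸ tsum_neg_of_add_swap_neg hF (fun p => ?_) (p₀ := (m, n)) ?_)
  · rw [hsym]
    exact mul_nonpos_of_nonneg_of_nonpos (hcoef p).le
      ((hmono.antivary hanti.antitone).sub_mul_sub_nonpos p.2 p.1)
  · rw [hsym]
    exact mul_neg_of_pos_of_neg (hcoef (m, n)) (hmono.sub_mul_sub_neg_of_strictAnti hanti hmn)

theorem quotient_of_power_series_strictMono_general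
    (r : ℝ) (rs ss : ℕ → ℝ) (hs : ∀ n, 0 < ss n)
    (hR : ∀ x : ℝ, |x| < r → Summable (fun n => rs n * x ^ n))
    (hS : ∀ x : ℝ, |x| < r → Summable (fun n => ss n * x ^ n))
    (hmono : Monotone (fun n => rs n / ss n))
    (hnonconst : ∃ m n, rs m / ss m ≠ rs n / ss n) :
    StrictMonoOn (fun x : ℝ => (∑' n : ℕ, rs n * x ^ n) / (∑' n : ℕ, ss n * x ^ n))
      (Set.Ioo 0 r) := by
  have habs : ∀ z ∈ Set.Ioo 0 r, |z| < r := fun z hz => (abs_of_pos hz.1).symm ▸ hz.2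
  have hS_pos : ∀ z ∈ Set.Ioo 0 r, 0 < ∑' n, ss n * z ^ n := fun z hz =>
    (hS z (habs z hz)).tsum_pos (fun n => (mul_pos (hs n) (pow_pos hz.1 n)).le) 0
      (mul_pos (hs 0) (pow_pos hz.1 0))
  intro x hx y hy hxy
  rw [div_lt_div_iff₀ (hS_pos x hx) (hS_pos y hy)]
  exact tsum_mul_tsum_lt_tsum_mul_tsum hs hmono hnonconst hx.1 hxy
    (summable_norm_mul_pow_of_forall_abs_lt hR (habs x hx))
    (summable_norm_mul_pow_of_forall_abs_lt hR (habs y hy))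
    (summable_norm_mul_pow_of_forall_abs_lt hS (habs x hx))
    (summable_norm_mul_pow_of_forall_abs_lt hS (habs y hy))

theorem quotient_of_power_series_strictMono
    (r : ℝ) (hr : 0 < r) (rs ss : ℕ → ℝ) (hs : ∀ n, 0 < ss n)
    (hR : ∀ x : ℝ, |x| < r → Summable (fun n => rs n * x ^ n))
    (hS : ∀ x : ℝ, |x| < r → Summable (fun n => ss n * x ^ n))
    (hmono : Monotone (fun n => rs n / ss n))
    (hnonconst : ∃ m n, rs m / ss m ≠ rs n / ss n) :
    StrictMonoOn (fun x : ℝ => (∑' n : ℕ, rs n * x ^ n) / (∑' n : ℕ, ss n * x ^ n))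
      (Set.Ioo 0 r) :=
  quotient_of_power_series_strictMono_general r rs ss hs hR hS hmono hnonconst
end

section
/- Let $k\geq 1$ be an integer and let $\alpha<0$ (not an integer) and $\beta\in(-1,1)$ be real numbers with $\alpha+\beta>-1$. Define $F_k(t)=F(-\alpha,k-\beta;k+1;t)$, where $F$ is the Gauss hypergeometric function $F(a,b;c;t)=\sum_{n=0}^\infty \frac{(a)_n(b)_n}{(c)_n n!}t^n$. Then for $k\geq 2$ the function $t\mapsto F_k(t)/F_1(t)$ is strictly increasing on $(0,1)$. -/
/-- Pochhammer symbol `(a)_n = a (a+1) ⋯ (a+n-1)` for a real number `a`. -/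
noncomputable def poch (a : ℝ) (n : ℕ) : ℝ := ∏ i ∈ Finset.range n, (a + i)

/-- Gauss hypergeometric series `F(a,b;c;x) = ∑ (a)_n (b)_n / ((c)_n n!) xⁿ`. -/
noncomputable def hyperg (a b c x : ℝ) : ℝ :=
  ∑' n : ℕ, poch a n * poch b n / (poch c n * (Nat.factorial n : ℝ)) * x ^ n

namespace HypAux

open Filter

lemma poch_pos {a : ℝ} (ha : 0 < a) (n : ℕ) : 0 < poch a n :=
  Finset.prod_pos fun i _ => by positivity

/-- Coefficient of the hypergeometric series. -/
noncomputable def coef (a b c : ℝ) (n : ℕ) : ℝ :=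
  poch a n * poch b n / (poch c n * (Nat.factorial n : ℝ))

lemma coef_pos {a b c : ℝ} (ha : 0 < a) (hb : 0 < b) (hc : 0 < c) (n : ℕ) :
    0 < coef a b c n := by
  have h1 := poch_pos ha n
  have h2 := poch_pos hb n
  have h3 := poch_pos hc n
  have h4 : (0:ℝ) < n.factorial := by exact_mod_cast n.factorial_pos
  unfold coef; positivity

lemma coef_succ {a b c : ℝ} (ha : 0 < a) (hb : 0 < b) (hc : 0 < c) (n : ℕ) :
    coef a b c (n+1) = coef a b c n * ((a+n)*(b+n)/((c+n)*((n:ℝ)+1))) := by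
  have h1 : poch c n ≠ 0 := (poch_pos hc n).ne'
  have h2 : (n.factorial : ℝ) ≠ 0 := by exact_mod_cast n.factorial_ne_zero
  have h3 : c + (n:ℝ) ≠ 0 := by positivity
  have h4 : ((n:ℝ)+1) ≠ 0 := by positivity
  unfold coef poch
  rw [Finset.prod_range_succ, Finset.prod_range_succ, Finset.prod_range_succ,
    Nat.factorial_succ]
  push_cast
  field_simp

lemma tendsto_ratio {a b c : ℝ} (hc : 0 < c) :
    Tendsto (fun n : ℕ => (a+(n:ℝ))*(b+(n:ℝ))/((c+(n:ℝ))*((n:ℝ)+1))) atTop (nhds 1) := by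
  have h0 : Tendsto (fun n : ℕ => 1/(n:ℝ)) atTop (nhds 0) :=
    tendsto_one_div_atTop_nhds_zero_nat
  have hnum : Tendsto (fun n : ℕ => (a*(1/(n:ℝ))+1)*(b*(1/(n:ℝ))+1)) atTop (nhds 1) := by
    have := ((h0.const_mul a).add_const 1).mul ((h0.const_mul b).add_const 1)
    simpa using this
  have hden : Tendsto (fun n : ℕ => (c*(1/(n:ℝ))+1)*(1+1/(n:ℝ))) atTop (nhds 1) := by
    have := ((h0.const_mul c).add_const 1).mul (h0.const_add 1)
    simpa using this
  have h : Tendsto (fun n : ℕ =>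
      ((a*(1/(n:ℝ))+1)*(b*(1/(n:ℝ))+1))/((c*(1/(n:ℝ))+1)*(1+1/(n:ℝ)))) atTop (nhds 1) := by
    have := hnum.div hden one_ne_zero
    simpa [Pi.div_def] using this
  refine h.congr' ?_
  filter_upwards [eventually_ge_atTop 1] with n hn
  have hn0 : (n:ℝ) ≠ 0 := by
    have : (1:ℝ) ≤ (n:ℝ) := by exact_mod_cast hn
    linarith
  have h3 : c + (n:ℝ) ≠ 0 := by positivity
  have h4 : ((n:ℝ)+1) ≠ 0 := by positivity
  field_simp

lemma summable_coef {a b c : ℝ} (ha : 0 < a) (hb : 0 < b) (hc : 0 < c)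
    {x : ℝ} (hx0 : 0 < x) (hx1 : x < 1) :
    Summable (fun n : ℕ => coef a b c n * x ^ n) := by
  apply summable_of_ratio_test_tendsto_lt_one hx1
  · exact Eventually.of_forall fun n =>
      (mul_pos (coef_pos ha hb hc n) (pow_pos hx0 n)).ne'
  · have h : Tendsto (fun n : ℕ => ((a+(n:ℝ))*(b+(n:ℝ))/((c+(n:ℝ))*((n:ℝ)+1))) * x)
        atTop (nhds (1*x)) := (tendsto_ratio hc).mul_const x
    rw [one_mul] at h
    refine h.congr fun n => ?_
    have hfn : 0 < coef a b c n * x^n := mul_pos (coef_pos ha hb hc n) (pow_pos hx0 n)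
    have hfn1 : 0 < coef a b c (n+1) * x^(n+1) :=
      mul_pos (coef_pos ha hb hc (n+1)) (pow_pos hx0 (n+1))
    rw [Real.norm_eq_abs, Real.norm_eq_abs, abs_of_pos hfn1, abs_of_pos hfn,
      coef_succ ha hb hc, pow_succ, eq_div_iff hfn.ne']
    ring

lemma hyperg_eq (a b c x : ℝ) : hyperg a b c x = ∑' n : ℕ, coef a b c n * x ^ n := rfl

/-- Key coefficient inequality. -/
lemma key {α β : ℝ} {k : ℕ} (hA : (0:ℝ) < -α) (hβ : -1 < β) (hβ' : β < 1)
    (hk2 : (2:ℝ) ≤ (k:ℝ)) {m n : ℕ} (hmn : m < n) :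
    coef (-α) ((k:ℝ)-β) ((k:ℝ)+1) m * coef (-α) (1-β) 2 n <
      coef (-α) ((k:ℝ)-β) ((k:ℝ)+1) n * coef (-α) (1-β) 2 m := by
  have hB : (0:ℝ) < (k:ℝ) - β := by linarith
  have hC : (0:ℝ) < (k:ℝ) + 1 := by linarith
  have hB' : (0:ℝ) < 1 - β := by linarith
  have hC' : (0:ℝ) < (2:ℝ) := by norm_num
  -- the product inequality
  have hprod : poch ((k:ℝ)-β) m * poch 2 m * (poch (1-β) n * poch ((k:ℝ)+1) n) <
      poch ((k:ℝ)-β) n * poch 2 n * (poch (1-β) m * poch ((k:ℝ)+1) m) := by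
    have hQ : poch ((k:ℝ)-β) n = poch ((k:ℝ)-β) m * ∏ i ∈ Finset.Ico m n, ((k:ℝ)-β+i) :=
      (Finset.prod_range_mul_prod_Ico _ hmn.le).symm
    have hT : poch 2 n = poch 2 m * ∏ i ∈ Finset.Ico m n, ((2:ℝ)+i) :=
      (Finset.prod_range_mul_prod_Ico _ hmn.le).symm
    have hS : poch (1-β) n = poch (1-β) m * ∏ i ∈ Finset.Ico m n, (1-β+i) :=
      (Finset.prod_range_mul_prod_Ico _ hmn.le).symm
    have hR : poch ((k:ℝ)+1) n = poch ((k:ℝ)+1) m * ∏ i ∈ Finset.Ico m n, ((k:ℝ)+1+i) :=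
      (Finset.prod_range_mul_prod_Ico _ hmn.le).symm
    rw [hQ, hT, hS, hR]
    have hIco : ∏ i ∈ Finset.Ico m n, ((1-β+i) * ((k:ℝ)+1+i)) <
        ∏ i ∈ Finset.Ico m n, (((k:ℝ)-β+i) * ((2:ℝ)+i)) := by
      refine Finset.prod_lt_prod_of_nonempty (fun i _ => by positivity)
        (fun i _ => ?_) (by rwa [Finset.nonempty_Ico])
      nlinarith [Nat.cast_nonneg (α := ℝ) i]
    rw [Finset.prod_mul_distrib, Finset.prod_mul_distrib] at hIco
    have hQm := poch_pos hB m
    have hTm := poch_pos hC' m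
    have hSm := poch_pos hB' m
    have hRm := poch_pos hC m
    have hPS : (0:ℝ) < ∏ i ∈ Finset.Ico m n, (1-β+(i:ℝ)) :=
      Finset.prod_pos fun i _ => by positivity
    have hPR : (0:ℝ) < ∏ i ∈ Finset.Ico m n, ((k:ℝ)+1+(i:ℝ)) :=
      Finset.prod_pos fun i _ => by positivity
    have hPQ : (0:ℝ) < ∏ i ∈ Finset.Ico m n, ((k:ℝ)-β+(i:ℝ)) :=
      Finset.prod_pos fun i _ => by positivity
    have hPT : (0:ℝ) < ∏ i ∈ Finset.Ico m n, ((2:ℝ)+(i:ℝ)) :=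
      Finset.prod_pos fun i _ => by positivity
    nlinarith [mul_lt_mul_of_pos_left hIco
      (mul_pos (mul_pos (mul_pos hQm hTm) hSm) hRm)]
  -- conclude
  have hPm := poch_pos hA m
  have hPn := poch_pos hA n
  have hQm := poch_pos hB m
  have hQn := poch_pos hB n
  have hTm := poch_pos hC' m
  have hTn := poch_pos hC' n
  have hSm := poch_pos hB' m
  have hSn := poch_pos hB' n
  have hRm := poch_pos hC m
  have hRn := poch_pos hC n
  have hfm : (0:ℝ) < m.factorial := by exact_mod_cast m.factorial_pos
  have hfn : (0:ℝ) < n.factorial := by exact_mod_cast n.factorial_pos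
  unfold coef
  rw [div_mul_div_comm, div_mul_div_comm, div_lt_div_iff₀ (by positivity) (by positivity)]
  nlinarith [mul_lt_mul_of_pos_left hprod
    (mul_pos (mul_pos (mul_pos hPm hPn) hfm) hfn)]

lemma pow_key {s t : ℝ} (hs0 : 0 < s) (hst : s < t) {m n : ℕ} (hmn : m < n) :
    t^m * s^n < s^m * t^n := by
  have h1 : s^(n-m) < t^(n-m) :=
    pow_lt_pow_left₀ hst hs0.le (by omega)
  have e1 : s^n = s^m * s^(n-m) := by rw [← pow_add]; congr 1; omega
  have e2 : t^n = t^m * t^(n-m) := by rw [← pow_add]; congr 1; omega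
  rw [e1, e2]
  have := mul_lt_mul_of_pos_left h1 (mul_pos (pow_pos hs0 m) (pow_pos (hs0.trans hst) m))
  nlinarith [this]

end HypAux

set_option maxHeartbeats 2000000 in
open HypAux Filter in
theorem hyperg_ratio_strictMono_Fk
    (α β : ℝ) (hα : α < 0) (hαZ : ∀ m : ℤ, α ≠ (m : ℝ))
    (hβ : -1 < β) (hβ' : β < 1) (hab : -1 < α + β)
    (k : ℕ) (hk : 2 ≤ k) :
    StrictMonoOn
      (fun t : ℝ => hyperg (-α) ((k : ℝ) - β) ((k : ℝ) + 1) t / hyperg (-α) (1 - β) 2 t)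
      (Set.Ioo (0 : ℝ) 1) := by
  have hA : (0:ℝ) < -α := by linarith
  have hk2 : (2:ℝ) ≤ (k:ℝ) := by exact_mod_cast hk
  have hB : (0:ℝ) < (k:ℝ) - β := by linarith
  have hC : (0:ℝ) < (k:ℝ) + 1 := by linarith
  have hB' : (0:ℝ) < 1 - β := by linarith
  have hC' : (0:ℝ) < (2:ℝ) := by norm_num
  simp only [hyperg_eq]
  set a : ℕ → ℝ := coef (-α) ((k:ℝ)-β) ((k:ℝ)+1) with ha_def
  set b : ℕ → ℝ := coef (-α) (1-β) 2 with hb_def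
  have hapos : ∀ n, 0 < a n := coef_pos hA hB hC
  have hbpos : ∀ n, 0 < b n := coef_pos hA hB' hC'
  intro s hs t ht hst
  obtain ⟨hs0, hs1⟩ := hs
  obtain ⟨ht0, ht1⟩ := ht
  have Sas : Summable (fun n => a n * s^n) := summable_coef hA hB hC hs0 hs1
  have Sat : Summable (fun n => a n * t^n) := summable_coef hA hB hC ht0 ht1
  have Sbs : Summable (fun n => b n * s^n) := summable_coef hA hB' hC' hs0 hs1
  have Sbt : Summable (fun n => b n * t^n) := summable_coef hA hB' hC' ht0 ht1
  have hgs : 0 < ∑' n, b n * s^n :=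
    Summable.tsum_pos Sbs (fun n => (mul_pos (hbpos n) (pow_pos hs0 n)).le) 0
      (mul_pos (hbpos 0) (pow_pos hs0 0))
  have hgt : 0 < ∑' n, b n * t^n :=
    Summable.tsum_pos Sbt (fun n => (mul_pos (hbpos n) (pow_pos ht0 n)).le) 0
      (mul_pos (hbpos 0) (pow_pos ht0 0))
  dsimp only
  rw [div_lt_div_iff₀ hgs hgt]
  -- the double sums
  have habs : ∀ (f : ℕ → ℝ), (∀ n, 0 ≤ f n) → Summable f → Summable (fun n => ‖f n‖) := by
    intro f hf hS
    simpa [Real.norm_eq_abs, abs_of_nonneg (hf _)] using hS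
  rw [tsum_mul_tsum_of_summable_norm
      (habs _ (fun n => (mul_pos (hapos n) (pow_pos hs0 n)).le) Sas)
      (habs _ (fun n => (mul_pos (hbpos n) (pow_pos ht0 n)).le) Sbt),
    tsum_mul_tsum_of_summable_norm
      (habs _ (fun n => (mul_pos (hapos n) (pow_pos ht0 n)).le) Sat)
      (habs _ (fun n => (mul_pos (hbpos n) (pow_pos hs0 n)).le) Sbs)]
  set F : ℕ × ℕ → ℝ := fun p => (a p.1 * s^p.1) * (b p.2 * t^p.2) with hF_def
  set G : ℕ × ℕ → ℝ := fun p => (a p.1 * t^p.1) * (b p.2 * s^p.2) with hG_def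
  have SF : Summable F := Sas.mul_of_nonneg Sbt
    (fun n => (mul_pos (hapos n) (pow_pos hs0 n)).le)
    (fun n => (mul_pos (hbpos n) (pow_pos ht0 n)).le)
  have SG : Summable G := Sat.mul_of_nonneg Sbs
    (fun n => (mul_pos (hapos n) (pow_pos ht0 n)).le)
    (fun n => (mul_pos (hbpos n) (pow_pos hs0 n)).le)
  set H : ℕ × ℕ → ℝ := fun p => G p - F p with hH_def
  have SH : Summable H := SG.sub SF
  have SHe : Summable (H ∘ (Equiv.prodComm ℕ ℕ)) := (Equiv.prodComm ℕ ℕ).summable_iff.mpr SH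
  set K : ℕ × ℕ → ℝ := fun p => (a p.1 * b p.2 - a p.2 * b p.1) * (t^p.1 * s^p.2 - s^p.1 * t^p.2)
    with hK_def
  have hHK : ∀ p : ℕ × ℕ, H p + H ((Equiv.prodComm ℕ ℕ) p) = K p := by
    intro ⟨m, n⟩
    simp only [hH_def, hK_def, hG_def, hF_def, Equiv.prodComm_apply, Prod.swap]
    ring
  have SK : Summable K := by
    have := SH.add SHe
    refine this.congr fun p => ?_
    exact hHK p
  have hKnonneg : ∀ p, 0 ≤ K p := by
    intro ⟨m, n⟩
    simp only [hK_def]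
    rcases lt_trichotomy m n with h | h | h
    · have h1 : a m * b n < a n * b m := key hA hβ hβ' hk2 h
      have h2 : t^m * s^n < s^m * t^n := pow_key hs0 hst h
      nlinarith
    · subst h; ring_nf; exact le_refl _
    · have h1 : a n * b m < a m * b n := key hA hβ hβ' hk2 h
      have h2 : t^n * s^m < s^n * t^m := pow_key hs0 hst h
      nlinarith
  have hK10 : 0 < K (1, 0) := by
    simp only [hK_def]
    have h1 : a 0 * b 1 < a 1 * b 0 := key hA hβ hβ' hk2 one_pos
    have h2 : t^0 * s^1 < s^0 * t^1 := pow_key hs0 hst one_pos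
    nlinarith
  have hKsum : 0 < ∑' p, K p := by
    have := Summable.tsum_lt_tsum (f := fun _ : ℕ × ℕ => (0:ℝ)) (g := K) (i := (1,0))
      (fun p => hKnonneg p) hK10 summable_zero SK
    simpa using this
  have hHsum : ∑' p, H p + ∑' p, H p = ∑' p, K p := by
    have h1 : ∑' p, H ((Equiv.prodComm ℕ ℕ) p) = ∑' p, H p := (Equiv.prodComm ℕ ℕ).tsum_eq H
    calc ∑' p, H p + ∑' p, H p = ∑' p, H p + ∑' p, H ((Equiv.prodComm ℕ ℕ) p) := by rw [h1]
      _ = ∑' p, (H p + H ((Equiv.prodComm ℕ ℕ) p)) := (Summable.tsum_add SH SHe).symm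
      _ = ∑' p, K p := by exact tsum_congr hHK
  have hHpos : 0 < ∑' p, H p := by linarith
  have := Summable.tsum_sub SG SF
  have hdiff : ∑' p, G p - ∑' p, F p = ∑' p, H p := by
    rw [← this]
  linarith [hHpos, hdiff]
end

section
/- Let $k\geq 1$ be an integer and let $-1<\beta<\alpha<0$ be real numbers. Define $E_k(t)=F(-\beta,k-\alpha;k+1;t)$ and $F_1(t)=F(-\alpha,1-\beta;2;t)$, where $F$ is the Gauss hypergeometric series. Then the function $t\mapsto E_k(t)/F_1(t)$ is strictly increasing on $(0,1)$. -/
/-!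
Both series have positive coefficients, and the ratio of their coefficients increases strictly:
successive coefficients of `F(a,b;c;·)` have ratio `(a+n)(b+n)/((c+n)(n+1))`, so this comes down
to comparing two cubics in `n` whose difference is linear in `n`, with nonnegative slope and
positive constant term when `-1 < β < α < 0` and `k ≥ 1`.

For `A = ∑ aₙ tⁿ` and `B = ∑ bₙ tⁿ` with `bₙ > 0` and `aₙ / bₙ` increasing,
`A(y)B(x) - A(x)B(y)` is the double sum of `aₘ bₙ (yᵐ xⁿ - xᵐ yⁿ)`. Pairing `(m, n)` with
`(n, m)` gives `(aₘ bₙ - aₙ bₘ)(yᵐ xⁿ - xᵐ yⁿ)`, a product of two factors with the sign of `m - n`,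
so the sum is positive when `x < y`.
-/

section RatioOfPowerSeries

lemma mul_sub_mul_pos_of_strictMono_div {u v : ℕ → ℝ} (hv : ∀ n, 0 < v n)
    (huv : StrictMono fun n => u n / v n) {m n : ℕ} (hnm : n < m) :
    0 < u m * v n - u n * v m := by
  have := huv hnm
  rw [div_lt_div_iff₀ (hv n) (hv m)] at this
  linarith

lemma mul_sub_mul_mul_nonneg_of_strictMono_div {u v u' v' : ℕ → ℝ} (hv : ∀ n, 0 < v n)
    (hv' : ∀ n, 0 < v' n) (huv : StrictMono fun n => u n / v n)
    (huv' : StrictMono fun n => u' n / v' n) (m n : ℕ) :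
    0 ≤ (u m * v n - u n * v m) * (u' m * v' n - u' n * v' m) := by
  rcases lt_trichotomy n m with h | rfl | h
  · exact (mul_pos (mul_sub_mul_pos_of_strictMono_div hv huv h)
      (mul_sub_mul_pos_of_strictMono_div hv' huv' h)).le
  · simp
  · have h₁ := mul_sub_mul_pos_of_strictMono_div hv huv h
    have h₂ := mul_sub_mul_pos_of_strictMono_div hv' huv' h
    exact mul_nonneg_of_nonpos_of_nonpos (by linarith) (by linarith)

lemma strictMono_pow_div_pow {x y : ℝ} (hx : 0 < x) (hxy : x < y) :
    StrictMono fun n : ℕ => y ^ n / x ^ n := by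
  intro m n hmn
  simp only [← div_pow]
  exact pow_lt_pow_right₀ ((one_lt_div hx).2 hxy) hmn

lemma tsum_pos_of_add_swap_nonneg {ι : Type*} {f : ι × ι → ℝ} (hf : Summable f)
    (hnn : ∀ p, 0 ≤ f p + f p.swap) (p₀ : ι × ι) (hp₀ : 0 < f p₀ + f p₀.swap) :
    0 < ∑' p, f p := by
  have hswap : Summable fun p : ι × ι => f p.swap := (Equiv.prodComm ι ι).summable_iff.2 hf
  have h2 : ∑' p, (f p + f p.swap) = 2 * ∑' p, f p := by
    rw [hf.tsum_add hswap,
      show ∑' p : ι × ι, f p.swap = ∑' p, f p from (Equiv.prodComm ι ι).tsum_eq f]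
    ring
  have := (hf.add hswap).tsum_pos hnn p₀ hp₀
  linarith

variable {a b : ℕ → ℝ}

theorem tsum_mul_tsum_lt_of_strictMono_div (ha : ∀ n, 0 ≤ a n) (hb : ∀ n, 0 < b n)
    (hab : StrictMono fun n => a n / b n) {x y : ℝ} (hx : 0 < x) (hxy : x < y)
    (hay : Summable fun n => a n * y ^ n) (hby : Summable fun n => b n * y ^ n) :
    (∑' n, a n * x ^ n) * (∑' n, b n * y ^ n)
      < (∑' n, a n * y ^ n) * (∑' n, b n * x ^ n) := by
  have hy : 0 < y := hx.trans hxy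
  have hax : Summable fun n => a n * x ^ n :=
    hay.of_nonneg_of_le (fun n => by have := ha n; positivity)
      (fun n => mul_le_mul_of_nonneg_left (pow_le_pow_left₀ hx.le hxy.le n) (ha n))
  have hbx : Summable fun n => b n * x ^ n :=
    hby.of_nonneg_of_le (fun n => by have := hb n; positivity)
      (fun n => mul_le_mul_of_nonneg_left (pow_le_pow_left₀ hx.le hxy.le n) (hb n).le)
  have nonneg {c : ℕ → ℝ} (hc : ∀ n, 0 ≤ c n) {t : ℝ} (ht : 0 < t) :
      0 ≤ fun n => c n * t ^ n := fun n => by have := hc n; positivity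
  have hb' n := (hb n).le
  have hprodyx := hay.mul_of_nonneg hbx (nonneg ha hy) (nonneg hb' hx)
  have hprodxy := hax.mul_of_nonneg hby (nonneg ha hx) (nonneg hb' hy)
  set D : ℕ × ℕ → ℝ := fun p => a p.1 * b p.2 * (y ^ p.1 * x ^ p.2 - x ^ p.1 * y ^ p.2)
  have hD : (∑' n, a n * y ^ n) * (∑' n, b n * x ^ n)
      - (∑' n, a n * x ^ n) * (∑' n, b n * y ^ n) = ∑' p, D p := by
    rw [hay.tsum_mul_tsum hbx hprodyx, hax.tsum_mul_tsum hby hprodxy, ← hprodyx.tsum_sub hprodxy]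
    exact tsum_congr fun p => by ring
  have hDswap (p : ℕ × ℕ) : D p + D p.swap
      = (a p.1 * b p.2 - a p.2 * b p.1) * (y ^ p.1 * x ^ p.2 - y ^ p.2 * x ^ p.1) := by
    simp only [D, Prod.fst_swap, Prod.snd_swap]
    ring
  have hpow := strictMono_pow_div_pow hx hxy
  have hxpos n : 0 < x ^ n := pow_pos hx n
  have : 0 < ∑' p, D p := by
    refine tsum_pos_of_add_swap_nonneg
      (hprodyx.sub hprodxy |>.congr fun p => by simp only [D]; ring)
      (fun p => hDswap p ▸ mul_sub_mul_mul_nonneg_of_strictMono_div hb hxpos hab hpow p.1 p.2)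
      (1, 0) ?_
    rw [hDswap]
    exact mul_pos (mul_sub_mul_pos_of_strictMono_div hb hab one_pos)
      (mul_sub_mul_pos_of_strictMono_div hxpos hpow one_pos)
  linarith

theorem strictMonoOn_tsum_div_tsum (ha : ∀ n, 0 ≤ a n) (hb : ∀ n, 0 < b n)
    (hab : StrictMono fun n => a n / b n) {r : ℝ}
    (hsa : ∀ t ∈ Set.Ioo 0 r, Summable fun n => a n * t ^ n)
    (hsb : ∀ t ∈ Set.Ioo 0 r, Summable fun n => b n * t ^ n) :
    StrictMonoOn (fun t => (∑' n, a n * t ^ n) / ∑' n, b n * t ^ n) (Set.Ioo 0 r) := by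
  have hpos : ∀ t ∈ Set.Ioo 0 r, 0 < ∑' n, b n * t ^ n := fun t ht =>
    (hsb t ht).tsum_pos (fun n => by have := hb n; have := ht.1; positivity) 0 (by simpa using hb 0)
  intro x hx y hy hxy
  rw [div_lt_div_iff₀ (hpos x hx) (hpos y hy)]
  exact tsum_mul_tsum_lt_of_strictMono_div ha hb hab hx.1 hxy (hsa y hy) (hsb y hy)

end RatioOfPowerSeries

lemma poch_eq_ascPochhammer_eval (a : ℝ) (n : ℕ) : poch a n = (ascPochhammer ℝ n).eval a := by
  induction n with
  | zero => simp [poch]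
  | succ n ih => rw [poch, Finset.prod_range_succ, ← poch, ih, ascPochhammer_succ_eval]

lemma poch_pos {a : ℝ} (ha : 0 < a) (n : ℕ) : 0 < poch a n :=
  poch_eq_ascPochhammer_eval a n ▸ ascPochhammer_pos n a ha

noncomputable def hypergCoeff (a b c : ℝ) (n : ℕ) : ℝ :=
  poch a n * poch b n / (poch c n * (Nat.factorial n : ℝ))

lemma hyperg_eq_tsum (a b c x : ℝ) : hyperg a b c x = ∑' n, hypergCoeff a b c n * x ^ n := rfl

lemma hypergCoeff_pos {a b c : ℝ} (ha : 0 < a) (hb : 0 < b) (hc : 0 < c) (n : ℕ) :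
    0 < hypergCoeff a b c n := by
  have := poch_pos ha n; have := poch_pos hb n; have := poch_pos hc n
  unfold hypergCoeff; positivity

lemma hypergCoeff_succ (a b c : ℝ) (n : ℕ) :
    hypergCoeff a b c (n + 1)
      = hypergCoeff a b c n * ((a + n) * (b + n) / ((c + n) * (n + 1))) := by
  simp only [hypergCoeff, poch, Finset.prod_range_succ, Nat.factorial_succ]
  push_cast
  field_simp

lemma summable_hypergCoeff_mul_pow {a b c : ℝ} (ha : 0 < a) (hb : 0 < b) (hc : 0 < c) {x : ℝ}
    (hx : |x| < 1) : Summable fun n => hypergCoeff a b c n * x ^ n := by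
  have hradius := ordinaryHypergeometricSeries_radius_eq_one ℝ a b c fun k =>
    ⟨by linarith [k.cast_nonneg (α := ℝ)], by linarith [k.cast_nonneg (α := ℝ)],
      by linarith [k.cast_nonneg (α := ℝ)]⟩
  have hmem : x ∈ Metric.eball (0 : ℝ) (ordinaryHypergeometricSeries ℝ a b c).radius := by
    rw [hradius, Metric.mem_eball, edist_zero_right, ← ofReal_norm]
    simpa using hx
  refine ((ordinaryHypergeometricSeries ℝ a b c).summable_norm_apply hmem).of_norm.congr
    fun n => ?_
  rw [ordinaryHypergeometricSeries_apply_eq, hypergCoeff, smul_eq_mul,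
    poch_eq_ascPochhammer_eval, poch_eq_ascPochhammer_eval, poch_eq_ascPochhammer_eval]
  ring

theorem strictMono_hypergCoeff_div {a b c a' b' c' : ℝ} (ha : 0 < a) (hb : 0 < b) (hc : 0 < c)
    (ha' : 0 < a') (hb' : 0 < b') (hc' : 0 < c')
    (h : ∀ n : ℕ, (a' + n) * (b' + n) * (c + n) < (a + n) * (b + n) * (c' + n)) :
    StrictMono fun n => hypergCoeff a b c n / hypergCoeff a' b' c' n := by
  refine strictMono_nat_of_lt_succ fun n => ?_
  have hA := hypergCoeff_pos ha hb hc n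
  have hB := hypergCoeff_pos ha' hb' hc' n
  have hstep : (a' + n) * (b' + n) / ((c' + n) * (n + 1))
      < (a + n) * (b + n) / ((c + n) * (n + 1)) := by
    rw [div_lt_div_iff₀ (by positivity) (by positivity)]
    have := mul_lt_mul_of_pos_right (h n) (by positivity : (0 : ℝ) < n + 1)
    linarith
  rw [hypergCoeff_succ, hypergCoeff_succ, mul_div_mul_comm,
    lt_mul_iff_one_lt_right (div_pos hA hB), one_lt_div (by positivity)]
  exact hstep

lemma step_ineq_Ek_F1 {α β K : ℝ} (hβ : -1 < β) (hβα : β < α) (hα : α < 0)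
    (hK : 1 ≤ K) (n : ℕ) :
    (-α + n) * (1 - β + n) * (K + 1 + n) < (-β + n) * (K - α + n) * (2 + n) := by
  have hn : (0 : ℝ) ≤ n := n.cast_nonneg
  have hdiff : (-β + n) * (K - α + n) * (2 + n) - (-α + n) * (1 - β + n) * (K + 1 + n)
      = n * ((K - 1) * (1 + α) + (α - β)) + (K - 1) * ((α - β) + -β * (1 + α))
        + 2 * (α - β) := by
    ring
  have h₁ : 0 ≤ n * ((K - 1) * (1 + α) + (α - β)) := by
    have : 0 ≤ (K - 1) * (1 + α) := mul_nonneg (by linarith) (by linarith)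
    exact mul_nonneg hn (by linarith)
  have h₂ : 0 ≤ (K - 1) * ((α - β) + -β * (1 + α)) := by
    have : 0 ≤ -β * (1 + α) := mul_nonneg (by linarith) (by linarith)
    exact mul_nonneg (by linarith) (by linarith)
  linarith

theorem hyperg_ratio_strictMono_Ek
    (α β : ℝ) (hβ : -1 < β) (hβα : β < α) (hα : α < 0)
    (k : ℕ) (hk : 1 ≤ k) :
    StrictMonoOn
      (fun t : ℝ => hyperg (-β) ((k : ℝ) - α) ((k : ℝ) + 1) t / hyperg (-α) (1 - β) 2 t)
      (Set.Ioo (0 : ℝ) 1) := by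
  have hK : (1 : ℝ) ≤ k := by exact_mod_cast hk
  have h₁ : 0 < -β := by linarith
  have h₂ : 0 < (k : ℝ) - α := by linarith
  have h₃ : 0 < (k : ℝ) + 1 := by linarith
  have h₄ : 0 < -α := by linarith
  have h₅ : 0 < 1 - β := by linarith
  have hsummable {a b c : ℝ} (ha : 0 < a) (hb : 0 < b) (hc : 0 < c) (t : ℝ)
      (ht : t ∈ Set.Ioo (0 : ℝ) 1) : Summable fun n => hypergCoeff a b c n * t ^ n :=
    summable_hypergCoeff_mul_pow ha hb hc (abs_lt.2 ⟨by linarith [ht.1], ht.2⟩)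
  simp only [hyperg_eq_tsum]
  refine strictMonoOn_tsum_div_tsum (fun n => (hypergCoeff_pos h₁ h₂ h₃ n).le)
    (hypergCoeff_pos h₄ h₅ two_pos) ?_ (hsummable h₁ h₂ h₃) (hsummable h₄ h₅ two_pos)
  exact strictMono_hypergCoeff_div h₁ h₂ h₃ h₄ h₅ two_pos
    (step_ineq_Ek_F1 hβ hβα hα hK)
end

section
/- Let $a,b,c$ be real numbers with $c>0$, $a\leq c$, $b\leq c$ and $ab\leq 0$. Then the Gauss hypergeometric function $x\mapsto F(a,b;c;x)=\sum_{n=0}^\infty \frac{(a)_n(b)_n}{(c)_n n!}x^n$ is monotonically decreasing on $(0,1)$. If instead $ab\geq 0$ (with the same other hypotheses), it is monotonically increasing on $(0,1)$. -/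
namespace HypergAux

open Filter Finset PowerSeries

noncomputable def hcoef (A B C : ℝ) (n : ℕ) : ℝ :=
  poch A n * poch B n / (poch C n * (Nat.factorial n : ℝ))

noncomputable def bcoef (s : ℝ) (k : ℕ) : ℝ := poch s k / (Nat.factorial k : ℝ)

@[simp] lemma poch_zero (a : ℝ) : poch a 0 = 1 := by simp [poch]

lemma poch_succ (a : ℝ) (n : ℕ) : poch a (n + 1) = poch a n * (a + n) :=
  Finset.prod_range_succ _ _

lemma poch_succ' (a : ℝ) (n : ℕ) : poch a (n + 1) = a * poch (a + 1) n := by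
  rw [poch, Finset.prod_range_succ']
  rw [mul_comm]
  congr 1
  · simp
  · apply Finset.prod_congr rfl
    intro i _
    push_cast
    ring

lemma poch_nonneg {a : ℝ} (ha : 0 ≤ a) (n : ℕ) : 0 ≤ poch a n :=
  Finset.prod_nonneg fun i _ => by positivity

lemma poch_pos {a : ℝ} (ha : 0 < a) (n : ℕ) : 0 < poch a n :=
  Finset.prod_pos fun i _ => by positivity

@[simp] lemma hcoef_zero (A B C : ℝ) : hcoef A B C 0 = 1 := by simp [hcoef]

@[simp] lemma bcoef_zero (s : ℝ) : bcoef s 0 = 1 := by simp [bcoef]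

lemma hcoef_succ {C : ℝ} (hC : 0 < C) (A B : ℝ) (n : ℕ) :
    hcoef A B C (n + 1) = hcoef A B C n * ((A + n) * (B + n) / ((C + n) * (n + 1))) := by
  have h1 : (0:ℝ) < poch C n := poch_pos hC n
  have h2 : (0:ℝ) < C + n := by positivity
  have h3 : (0:ℝ) < (Nat.factorial n : ℝ) := by positivity
  rw [hcoef, hcoef, poch_succ, poch_succ, poch_succ, Nat.factorial_succ]
  push_cast
  field_simp

lemma hcoef_rec {C : ℝ} (hC : 0 < C) (A B : ℝ) (n : ℕ) :
    ((n:ℝ) + 1) * ((n:ℝ) + C) * hcoef A B C (n + 1)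
      = ((n:ℝ) + A) * ((n:ℝ) + B) * hcoef A B C n := by
  have h2 : (0:ℝ) < C + n := by positivity
  rw [hcoef_succ hC]
  field_simp
  ring

lemma bcoef_succ (s : ℝ) (k : ℕ) :
    bcoef s (k + 1) = bcoef s k * ((s + k) / (k + 1)) := by
  have h3 : ((Nat.factorial k : ℝ)) ≠ 0 := by positivity
  have h4 : ((k:ℝ) + 1) ≠ 0 := by positivity
  rw [bcoef, bcoef, poch_succ, Nat.factorial_succ, div_mul_div_comm]
  push_cast
  rw [mul_comm ((Nat.factorial k : ℝ)) _]

lemma bcoef_succ' (s : ℝ) (k : ℕ) :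
    ((k:ℝ) + 1) * bcoef s (k + 1) = s * bcoef (s + 1) k := by
  have h3 : ((Nat.factorial k : ℝ)) ≠ 0 := by positivity
  have h4 : ((k:ℝ) + 1) ≠ 0 := by positivity
  rw [bcoef, bcoef, poch_succ', Nat.factorial_succ]
  push_cast
  field_simp

lemma bcoef_shift (s : ℝ) (k : ℕ) :
    bcoef (s + 1) (k + 1) - bcoef (s + 1) k = bcoef s (k + 1) := by
  have h3 : ((Nat.factorial k : ℝ)) ≠ 0 := by positivity
  have h4 : ((k:ℝ) + 1) ≠ 0 := by positivity
  rw [bcoef, bcoef, bcoef, poch_succ, poch_succ', Nat.factorial_succ]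
  push_cast
  field_simp
  ring

/-! ### Formal power series -/

noncomputable def hps (A B C : ℝ) : ℝ⟦X⟧ := PowerSeries.mk (hcoef A B C)
noncomputable def bps (s : ℝ) : ℝ⟦X⟧ := PowerSeries.mk (bcoef s)

noncomputable abbrev DD : ℝ⟦X⟧ → ℝ⟦X⟧ := fun f => PowerSeries.derivative ℝ f

lemma derivative_bps (s : ℝ) : DD (bps s) = C s * bps (s + 1) := by
  ext k
  rw [coeff_derivative]
  simp only [bps, coeff_mk, coeff_C_mul]
  rw [mul_comm (bcoef s (k+1)) _, bcoef_succ']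

lemma one_sub_X_mul_bps (s : ℝ) : (1 - X) * bps (s + 1) = bps s := by
  ext k
  rw [sub_mul, one_mul, map_sub]
  cases k with
  | zero => simp [bps, bcoef_zero]
  | succ k =>
      rw [coeff_succ_X_mul]
      simp only [bps, coeff_mk]
      exact bcoef_shift s k

noncomputable def ode (A B K : ℝ) (Y : ℝ⟦X⟧) : ℝ⟦X⟧ :=
  X * (1 - X) * DD (DD Y) + (C K - C (A + B + 1) * X) * DD Y - C (A * B) * Y

lemma coeff_ode (A B K : ℝ) (Y : ℝ⟦X⟧) (n : ℕ) :
    coeff n (ode A B K Y)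
      = ((n:ℝ) + 1) * ((n:ℝ) + K) * coeff (n + 1) Y
        - ((n:ℝ) + A) * ((n:ℝ) + B) * coeff n Y := by
  have expand : ode A B K Y
      = X * DD (DD Y) - X ^ 2 * DD (DD Y) + C K * DD Y
        - C (A + B + 1) * (X * DD Y) - C (A * B) * Y := by
    rw [ode]; ring
  rw [expand]
  rw [map_sub, map_sub, map_add, map_sub, coeff_C_mul, coeff_C_mul, coeff_C_mul]
  cases n with
  | zero =>
      simp only [coeff_zero_eq_constantCoeff, map_mul, constantCoeff_X, zero_mul, mul_zero,
        pow_two]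
      have h1 : constantCoeff (DD Y) = coeff 1 Y := by
        rw [← coeff_zero_eq_constantCoeff, coeff_derivative]; push_cast; ring
      have h3 : constantCoeff Y = coeff 0 Y := by
        rw [coeff_zero_eq_constantCoeff]
      rw [h1, h3]
      norm_num
  | succ m =>
      rw [coeff_succ_X_mul, coeff_succ_X_mul, coeff_derivative, coeff_derivative,
        coeff_derivative]
      cases m with
      | zero =>
          have h2 : coeff 1 (X ^ 2 * DD (DD Y)) = 0 := by
            rw [pow_two]
            rw [mul_assoc, coeff_succ_X_mul]
            simp [PowerSeries.coeff_zero_X_mul]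
          rw [h2]
          push_cast; ring
      | succ p =>
          have h2 : coeff (p + 2) (X ^ 2 * DD (DD Y)) = coeff p (DD (DD Y)) := by
            have := PowerSeries.coeff_X_pow_mul (DD (DD Y)) 2 p
            simpa using this
          rw [h2, coeff_derivative, coeff_derivative]
          push_cast; ring

lemma ode_hps {K : ℝ} (hK : 0 < K) (A B : ℝ) : ode A B K (hps A B K) = 0 := by
  ext n
  rw [coeff_ode, map_zero]
  simp only [hps, coeff_mk]
  rw [hcoef_rec hK A B n]
  ring

lemma derivative_mul' (f g : ℝ⟦X⟧) : DD (f * g) = f * DD g + g * DD f := by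
  simpa [smul_eq_mul] using (PowerSeries.derivative ℝ).leibniz f g

lemma derivative_C_mul (r : ℝ) (f : ℝ⟦X⟧) : DD (C r * f) = C r * DD f := by
  rw [derivative_mul']; simp

lemma ode_mul (A B K : ℝ) (G : ℝ⟦X⟧) :
    ode A B K (bps (A + B - K) * G) = bps (A + B - K) * ode (K - A) (K - B) K G := by
  set s : ℝ := A + B - K with hs
  have h2' : (1 - X) * bps (s + 1 + 1) = bps (s + 1) := one_sub_X_mul_bps (s + 1)
  have h1 : bps (s + 1) = (1 - X) * bps (s + 1 + 1) := h2'.symm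
  have h0 : bps s = (1 - X) * ((1 - X) * bps (s + 1 + 1)) := by
    rw [h2', one_sub_X_mul_bps]
  have e1 : DD (bps s * G) = bps s * DD G + C s * bps (s + 1) * G := by
    rw [derivative_mul', derivative_bps]
    ring
  have e2 : DD (DD (bps s * G))
      = bps s * DD (DD G) + 2 * C s * (bps (s + 1) * DD G)
        + C s * C (s + 1) * (bps (s + 1 + 1) * G) := by
    have dadd : ∀ f g : ℝ⟦X⟧, DD (f + g) = DD f + DD g := fun f g => map_add _ _ _
    rw [e1, dadd, derivative_mul']
    rw [show C s * bps (s + 1) * G = C s * (bps (s + 1) * G) by ring]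
    rw [derivative_C_mul, derivative_mul', derivative_bps, derivative_bps]
    ring
  rw [ode, ode, e2, e1, h1, h0]
  have hCs : C s = C A + C B - C K := by rw [hs]; simp [map_add, map_sub]
  have hCs1 : C (s + 1) = C A + C B - C K + 1 := by
    rw [map_add, hCs, map_one]
  have hC1 : C (A + B + 1) = C A + C B + 1 := by simp [map_add]
  have hC2 : C (A * B) = C A * C B := by simp [map_mul]
  have hC3 : C ((K - A) + (K - B) + 1) = (C K - C A) + (C K - C B) + 1 := by
    simp [map_add, map_sub]
  have hC4 : C ((K - A) * (K - B)) = (C K - C A) * (C K - C B) := by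
    simp [map_mul, map_sub]
  rw [hCs, hCs1, hC1, hC2, hC3, hC4]
  ring

lemma coeff_zero_mul (f g : ℝ⟦X⟧) : coeff 0 (f * g) = coeff 0 f * coeff 0 g := by
  simp [PowerSeries.coeff_mul]

lemma euler_ps {K : ℝ} (hK : 0 < K) (A B : ℝ) :
    hps A B K = bps (A + B - K) * hps (K - A) (K - B) K := by
  set P : ℝ⟦X⟧ := bps (A + B - K) * hps (K - A) (K - B) K with hP
  have hode : ode A B K P = 0 := by
    rw [hP, ode_mul, ode_hps hK, mul_zero]
  have hrec : ∀ n : ℕ, ((n:ℝ) + 1) * ((n:ℝ) + K) * coeff (n + 1) P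
      = ((n:ℝ) + A) * ((n:ℝ) + B) * coeff n P := by
    intro n
    have h := congrArg (coeff n) hode
    rw [coeff_ode, map_zero, sub_eq_zero] at h
    exact h
  have h0 : coeff 0 P = 1 := by
    rw [hP, coeff_zero_mul]
    simp [bps, hps, bcoef_zero, hcoef_zero]
  ext n
  induction n with
  | zero =>
      rw [h0]; simp [hps, hcoef_zero]
  | succ n ih =>
      have hne : ((n:ℝ) + 1) * ((n:ℝ) + K) ≠ 0 := by positivity
      have e1 := hcoef_rec hK A B n
      have e2 := hrec n
      have : coeff n P = hcoef A B K n := by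
        have := ih; simpa [hps, coeff_mk] using this.symm
      rw [this] at e2
      have : ((n:ℝ) + 1) * ((n:ℝ) + K) * coeff (n + 1) P
          = ((n:ℝ) + 1) * ((n:ℝ) + K) * hcoef A B K (n + 1) := by
        rw [e1, e2]
      have := mul_left_cancel₀ hne this
      rw [hps, coeff_mk, ← this]

/-! ### Limits and summability -/

lemma tendsto_shift_div (d e : ℝ) :
    Tendsto (fun n : ℕ => ((n:ℝ) + d) / ((n:ℝ) + e)) atTop (nhds 1) := by
  have hatop : Tendsto (fun n : ℕ => (n:ℝ) + e) atTop atTop :=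
    tendsto_atTop_add_const_right _ e tendsto_natCast_atTop_atTop
  have h0 : Tendsto (fun n : ℕ => (d - e) / ((n:ℝ) + e)) atTop (nhds 0) :=
    Tendsto.div_atTop tendsto_const_nhds hatop
  have h1 : Tendsto (fun n : ℕ => 1 + (d - e) / ((n:ℝ) + e)) atTop (nhds 1) := by
    have := h0.const_add (1:ℝ)
    simpa using this
  refine h1.congr' ?_
  filter_upwards [hatop.eventually_gt_atTop 0] with n hn
  have hne : (n:ℝ) + e ≠ 0 := ne_of_gt hn
  field_simp; ring

lemma tendsto_abs_shift_div (d e : ℝ) :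
    Tendsto (fun n : ℕ => |d + (n:ℝ)| / (e + (n:ℝ))) atTop (nhds 1) := by
  have h := tendsto_shift_div d e
  refine h.congr' ?_
  have hd : Tendsto (fun n : ℕ => (n:ℝ) + d) atTop atTop :=
    tendsto_atTop_add_const_right _ d tendsto_natCast_atTop_atTop
  filter_upwards [hd.eventually_ge_atTop 0] with n hn
  rw [abs_of_nonneg (by linarith [hn] : (0:ℝ) ≤ d + n)]
  rw [add_comm d, add_comm e]

lemma summable_abs_ratio {w R : ℕ → ℝ} (hR : ∀ n, |w (n + 1)| = R n * |w n|)
    (hRlim : Tendsto R atTop (nhds 1)) {x : ℝ} (hx : |x| < 1) :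
    Summable (fun n => |w n * x ^ n|) := by
  set r : ℝ := (1 + |x|) / 2 with hr
  have hr1 : r < 1 := by rw [hr]; linarith
  apply summable_of_ratio_norm_eventually_le hr1
  have hev : ∀ᶠ n in atTop, R n * |x| < r := by
    have : Tendsto (fun n => R n * |x|) atTop (nhds (1 * |x|)) := hRlim.mul_const _
    rw [one_mul] at this
    exact this.eventually_lt_const (by rw [hr]; linarith)
  filter_upwards [hev] with n hn
  have h1 : |w (n + 1) * x ^ (n + 1)| = (R n * |x|) * |w n * x ^ n| := by
    rw [abs_mul, abs_mul, hR n, pow_succ, abs_mul]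
    ring
  rw [Real.norm_eq_abs, Real.norm_eq_abs, abs_abs, abs_abs, h1]
  exact mul_le_mul_of_nonneg_right (le_of_lt hn) (abs_nonneg _)

lemma summable_abs_ratio_deriv {w R : ℕ → ℝ} (hR : ∀ n, |w (n + 1)| = R n * |w n|)
    (hRlim : Tendsto R atTop (nhds 1)) {x : ℝ} (hx : |x| < 1) :
    Summable (fun n : ℕ => |((n:ℝ) + 1) * w (n + 1) * x ^ n|) := by
  have hR' : ∀ n : ℕ, |(((n + 1 :ℕ):ℝ) + 1) * w ((n + 1) + 1)|
      = (((n:ℝ) + 2) / ((n:ℝ) + 1) * R (n + 1)) * |((n:ℝ) + 1) * w (n + 1)| := by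
    intro n
    have h1 : ((n:ℝ) + 1) ≠ 0 := by positivity
    rw [abs_mul, abs_mul, hR (n + 1)]
    push_cast
    rw [abs_of_nonneg (by positivity : (0:ℝ) ≤ (n:ℝ) + 1 + 1),
      abs_of_nonneg (by positivity : (0:ℝ) ≤ (n:ℝ) + 1)]
    field_simp
    ring
  have hlim' : Tendsto (fun n : ℕ => ((n:ℝ) + 2) / ((n:ℝ) + 1) * R (n + 1)) atTop (nhds 1) := by
    have h1 : Tendsto (fun n : ℕ => ((n:ℝ) + 2) / ((n:ℝ) + 1)) atTop (nhds 1) :=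
      tendsto_shift_div 2 1
    have h2 : Tendsto (fun n : ℕ => R (n + 1)) atTop (nhds 1) :=
      hRlim.comp (tendsto_add_atTop_nat 1)
    simpa using h1.mul h2
  have := summable_abs_ratio (w := fun n => ((n:ℝ) + 1) * w (n + 1)) hR' hlim' hx
  exact this

lemma hasDerivAt_powser {w R : ℕ → ℝ} (hR : ∀ n, |w (n + 1)| = R n * |w n|)
    (hRlim : Tendsto R atTop (nhds 1)) {x : ℝ} (hx : |x| < 1) :
    HasDerivAt (fun y : ℝ => ∑' n : ℕ, w n * y ^ n)
      (∑' n : ℕ, ((n:ℝ) + 1) * w (n + 1) * x ^ n) x := by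
  set r : ℝ := (1 + |x|) / 2 with hrdef
  have hr0 : 0 < r := by positivity
  have hrx : |x| < r := by rw [hrdef]; linarith
  have hr1 : r < 1 := by rw [hrdef]; linarith
  have hrabs : |r| < 1 := by rw [abs_of_pos hr0]; exact hr1
  set t : Set ℝ := Set.Ioo (-r) r with ht
  have hxt : x ∈ t := by
    constructor <;> [linarith [neg_abs_le x]; linarith [le_abs_self x]]
  have h0t : (0:ℝ) ∈ t := by constructor <;> simp [hr0]
  set u : ℕ → ℝ := fun n => (n:ℝ) * |w n| * r ^ (n - 1) with hu
  have hu_summ : Summable u := by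
    rw [← summable_nat_add_iff 1]
    have h := summable_abs_ratio_deriv hR hRlim hrabs
    apply h.congr
    intro n
    rw [hu]
    simp only [Nat.add_sub_cancel]
    rw [abs_mul, abs_mul, abs_pow, abs_of_pos hr0,
      abs_of_nonneg (by positivity : (0:ℝ) ≤ (n:ℝ) + 1)]
    push_cast
    ring
  have key := hasDerivAt_tsum_of_isPreconnected hu_summ isOpen_Ioo
    (convex_Ioo (-r) r).isPreconnected
    (g := fun n (y : ℝ) => w n * y ^ n)
    (g' := fun n (y : ℝ) => w n * ((n:ℝ) * y ^ (n - 1)))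
    (fun n y _ => (hasDerivAt_pow n y).const_mul (w n))
    (fun n y hy => ?_) h0t ?_ hxt
  · have hsum : Summable fun n : ℕ => w n * ((n:ℝ) * x ^ (n - 1)) := by
      apply Summable.of_norm_bounded hu_summ
      intro n
      rw [Real.norm_eq_abs, abs_mul, abs_mul, hu]
      have hyr : |x| ≤ r := le_of_lt hrx
      have : |x ^ (n-1)| ≤ r ^ (n-1) := by
        rw [abs_pow]
        exact pow_le_pow_left₀ (abs_nonneg x) hyr _
      have h2 : |(n:ℝ)| = (n:ℝ) := abs_of_nonneg (Nat.cast_nonneg n)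
      calc |w n| * (|(n:ℝ)| * |x ^ (n-1)|) ≤ |w n| * ((n:ℝ) * r ^ (n-1)) := by
            rw [h2]
            exact mul_le_mul_of_nonneg_left
              (mul_le_mul_of_nonneg_left this (Nat.cast_nonneg n)) (abs_nonneg _)
        _ = (n:ℝ) * |w n| * r ^ (n-1) := by ring
    have heq : ∑' n : ℕ, w n * ((n:ℝ) * x ^ (n - 1))
        = ∑' n : ℕ, ((n:ℝ) + 1) * w (n + 1) * x ^ n := by
      rw [Summable.tsum_eq_zero_add hsum]
      have h00 : w 0 * ((0:ℕ) * x ^ (0 - 1)) = 0 := by norm_num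
      rw [h00, zero_add]
      apply tsum_congr
      intro n
      simp only [Nat.add_sub_cancel]
      push_cast
      ring
    rw [← heq]
    exact key
  · rw [Real.norm_eq_abs, abs_mul, abs_mul, hu]
    have hyr : |y| ≤ r := by
      rw [abs_le]; exact ⟨le_of_lt hy.1, le_of_lt hy.2⟩
    have h1 : |y ^ (n-1)| ≤ r ^ (n-1) := by
      rw [abs_pow]; exact pow_le_pow_left₀ (abs_nonneg y) hyr _
    have h2 : |(n:ℝ)| = (n:ℝ) := abs_of_nonneg (Nat.cast_nonneg n)
    calc |w n| * (|(n:ℝ)| * |y ^ (n-1)|) ≤ |w n| * ((n:ℝ) * r ^ (n-1)) := by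
          rw [h2]
          exact mul_le_mul_of_nonneg_left
            (mul_le_mul_of_nonneg_left h1 (Nat.cast_nonneg n)) (abs_nonneg _)
      _ = (n:ℝ) * |w n| * r ^ (n-1) := by ring
  · apply summable_of_ne_finset_zero (s := {0})
    intro n hn
    have : n ≠ 0 := by simpa using hn
    simp [zero_pow this]

/-! ### The binomial series -/

noncomputable def Bfun (s x : ℝ) : ℝ := ∑' k : ℕ, bcoef s k * x ^ k

lemma bcoef_ratio (s : ℝ) (k : ℕ) :
    |bcoef s (k + 1)| = (|s + k| / ((k:ℝ) + 1)) * |bcoef s k| := by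
  rw [bcoef_succ, abs_mul, abs_div, abs_of_pos (by positivity : (0:ℝ) < (k:ℝ) + 1)]
  ring

lemma bcoef_Rlim (s : ℝ) :
    Tendsto (fun k : ℕ => |s + (k:ℝ)| / ((k:ℝ) + 1)) atTop (nhds 1) := by
  have := tendsto_abs_shift_div s 1
  refine this.congr fun k => by rw [add_comm 1 (k:ℝ)]

lemma summable_abs_bcoef (s : ℝ) {x : ℝ} (hx : |x| < 1) :
    Summable (fun k : ℕ => |bcoef s k * x ^ k|) :=
  summable_abs_ratio (fun k => bcoef_ratio s k) (bcoef_Rlim s) hx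

lemma summable_bcoef (s : ℝ) {x : ℝ} (hx : |x| < 1) :
    Summable (fun k : ℕ => bcoef s k * x ^ k) :=
  (summable_abs_bcoef s hx).of_abs

lemma hasDerivAt_Bfun (s : ℝ) {x : ℝ} (hx : |x| < 1) :
    HasDerivAt (fun y => Bfun s y) (s * Bfun (s + 1) x) x := by
  have h := hasDerivAt_powser (fun k => bcoef_ratio s k) (bcoef_Rlim s) hx
  have heq : (∑' k : ℕ, ((k:ℝ) + 1) * bcoef s (k + 1) * x ^ k) = s * Bfun (s + 1) x := by
    rw [show s * Bfun (s + 1) x = ∑' k : ℕ, s * (bcoef (s + 1) k * x ^ k) from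
      (tsum_mul_left).symm]
    apply tsum_congr
    intro k
    rw [bcoef_succ']
    ring
  rw [← heq]
  exact h

lemma Bfun_shift (s : ℝ) {x : ℝ} (hx : |x| < 1) :
    (1 - x) * Bfun (s + 1) x = Bfun s x := by
  have hsum : Summable (fun k : ℕ => bcoef (s + 1) k * x ^ k) := summable_bcoef _ hx
  have hsum2 : Summable (fun k : ℕ => bcoef (s + 1) (k + 1) * x ^ (k + 1)) := by
    rw [← summable_nat_add_iff 1] at hsum
    exact hsum
  have hxB : x * Bfun (s + 1) x = ∑' k : ℕ, bcoef (s + 1) k * x ^ (k + 1) := by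
    rw [Bfun, ← tsum_mul_left]
    apply tsum_congr; intro k; ring
  have hBs : Bfun s x = 1 + ∑' k : ℕ, bcoef s (k + 1) * x ^ (k + 1) := by
    rw [Bfun, Summable.tsum_eq_zero_add (summable_bcoef s hx)]
    rw [bcoef_zero]
    norm_num
  have hB1 : Bfun (s + 1) x = 1 + ∑' k : ℕ, bcoef (s + 1) (k + 1) * x ^ (k + 1) := by
    rw [Bfun, Summable.tsum_eq_zero_add hsum]
    rw [bcoef_zero]
    norm_num
  have hsplit : ∑' k : ℕ, bcoef s (k + 1) * x ^ (k + 1)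
      = (∑' k : ℕ, bcoef (s + 1) (k + 1) * x ^ (k + 1))
        - ∑' k : ℕ, bcoef (s + 1) k * x ^ (k + 1) := by
    rw [← Summable.tsum_sub hsum2 (by
      have := (summable_abs_bcoef (s+1) hx).of_abs
      have h2 : Summable (fun k : ℕ => x * (bcoef (s+1) k * x ^ k)) := this.mul_left x
      apply h2.congr; intro k; ring)]
    apply tsum_congr
    intro k
    rw [← sub_mul, bcoef_shift]
  rw [sub_mul, one_mul, hxB, hB1, hBs, hsplit]
  ring

lemma Bfun_zero (s : ℝ) : Bfun s 0 = 1 := by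
  rw [Bfun, tsum_eq_single 0 (by intro k hk; simp [zero_pow hk])]
  simp [bcoef_zero]

lemma Bfun_eq_rpow (s : ℝ) {x : ℝ} (hx0 : 0 ≤ x) (hx : x < 1) :
    Bfun s x = (1 - x) ^ (-s) := by
  rcases eq_or_lt_of_le hx0 with h | h
  · rw [← h, Bfun_zero]; norm_num
  set φ : ℝ → ℝ := fun y => (1 - y) ^ s * Bfun s y with hφ
  have hderiv : ∀ y ∈ Set.Icc (0:ℝ) x, HasDerivAt φ 0 y := by
    intro y hy
    have hy1 : y < 1 := lt_of_le_of_lt hy.2 hx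
    have hy1' : (0:ℝ) < 1 - y := by linarith
    have hyabs : |y| < 1 := by rw [abs_of_nonneg hy.1]; exact hy1
    have h1 : HasDerivAt (fun z : ℝ => 1 - z) (-1) y := by
      simpa using ((hasDerivAt_id y).const_sub 1)
    have h2 : HasDerivAt (fun z : ℝ => (1 - z) ^ s) (s * (1 - y) ^ (s - 1) * (-1)) y := by
      have := h1.rpow_const (p := s) (Or.inl (ne_of_gt hy1'))
      convert this using 1
      ring
    have h3 : HasDerivAt (fun z => Bfun s z) (s * Bfun (s + 1) y) y := hasDerivAt_Bfun s hyabs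
    have h4 := h2.mul h3
    have hkey : s * (1 - y) ^ (s - 1) * (-1) * Bfun s y
        + (1 - y) ^ s * (s * Bfun (s + 1) y) = 0 := by
      have hshift := Bfun_shift s hyabs
      have hrs : (1 - y) ^ s = (1 - y) ^ (s - 1) * (1 - y) := by
        rw [Real.rpow_sub hy1', Real.rpow_one, div_mul_cancel₀ _ (ne_of_gt hy1')]
      rw [hrs]
      calc s * (1 - y) ^ (s - 1) * (-1) * Bfun s y
            + (1 - y) ^ (s - 1) * (1 - y) * (s * Bfun (s + 1) y)
          = s * (1 - y) ^ (s - 1) * ((1 - y) * Bfun (s + 1) y - Bfun s y) := by ring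
        _ = 0 := by rw [hshift]; ring
    rw [← hkey]
    exact h4
  have hconst := constant_of_has_deriv_right_zero
    (f := φ) (a := 0) (b := x)
    (fun y hy => (hderiv y hy).continuousAt.continuousWithinAt)
    (fun y hy => ((hderiv y (Set.mem_Icc_of_Ico hy)).hasDerivWithinAt))
  have hx_mem : x ∈ Set.Icc (0:ℝ) x := Set.right_mem_Icc.mpr (le_of_lt h)
  have := hconst x hx_mem
  rw [hφ] at this
  simp only at this
  rw [Bfun_zero, sub_zero, Real.one_rpow, mul_one] at this
  have h1x : (0:ℝ) < 1 - x := by linarith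
  have hne : (1 - x) ^ s ≠ 0 := ne_of_gt (Real.rpow_pos_of_pos h1x s)
  rw [Real.rpow_neg (le_of_lt h1x)]
  field_simp at this ⊢
  linarith [this]

/-! ### Euler transformation at function level, positivity, derivative -/

lemma hyperg_eq_tsum (A B K x : ℝ) : hyperg A B K x = ∑' n : ℕ, hcoef A B K n * x ^ n := rfl

lemma hcoef_ratio {C : ℝ} (hC : 0 < C) (A B : ℝ) (n : ℕ) :
    |hcoef A B C (n + 1)|
      = (|A + n| / ((n:ℝ) + 1) * (|B + n| / (C + n))) * |hcoef A B C n| := by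
  have h1 : (0:ℝ) < (n:ℝ) + 1 := by positivity
  have h2 : (0:ℝ) < C + n := by positivity
  rw [hcoef_succ hC, abs_mul, abs_div, abs_mul, abs_mul,
    abs_of_pos h2, abs_of_pos h1]
  field_simp

lemma hcoef_Rlim {C : ℝ} (A B : ℝ) :
    Tendsto (fun n : ℕ => |A + n| / ((n:ℝ) + 1) * (|B + n| / (C + n))) atTop (nhds 1) := by
  have h1 := tendsto_abs_shift_div A 1
  have h2 := tendsto_abs_shift_div B C
  have h := h1.mul h2
  rw [one_mul] at h
  refine h.congr fun n => by rw [add_comm 1 (n:ℝ)]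

lemma summable_abs_hcoef {K : ℝ} (hK : 0 < K) (A B : ℝ) {x : ℝ} (hx : |x| < 1) :
    Summable (fun n : ℕ => |hcoef A B K n * x ^ n|) :=
  summable_abs_ratio (fun n => hcoef_ratio hK A B n) (hcoef_Rlim A B) hx

lemma euler_fun {K : ℝ} (hK : 0 < K) (A B : ℝ) {x : ℝ} (hx0 : 0 ≤ x) (hx : x < 1) :
    hyperg A B K x = (1 - x) ^ (K - A - B) * hyperg (K - A) (K - B) K x := by
  have hxabs : |x| < 1 := by rw [abs_of_nonneg hx0]; exact hx
  have h1 : (1 - x) ^ (K - A - B) = Bfun (A + B - K) x := by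
    rw [Bfun_eq_rpow _ hx0 hx]
    ring_nf
  rw [h1, hyperg_eq_tsum, hyperg_eq_tsum, Bfun]
  have hfs := summable_abs_bcoef (A + B - K) hxabs
  have hgs := summable_abs_hcoef hK (K - A) (K - B) hxabs
  rw [show (fun k : ℕ => |bcoef (A+B-K) k * x ^ k|) = (fun k : ℕ => ‖bcoef (A+B-K) k * x ^ k‖)
    from rfl] at hfs
  rw [show (fun k : ℕ => |hcoef (K-A) (K-B) K k * x ^ k|)
    = (fun k : ℕ => ‖hcoef (K-A) (K-B) K k * x ^ k‖) from rfl] at hgs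
  rw [tsum_mul_tsum_eq_tsum_sum_antidiagonal_of_summable_norm hfs hgs]
  apply tsum_congr
  intro n
  have : ∑ kl ∈ antidiagonal n, bcoef (A+B-K) kl.1 * x ^ kl.1
      * (hcoef (K-A) (K-B) K kl.2 * x ^ kl.2)
      = (∑ kl ∈ antidiagonal n, bcoef (A+B-K) kl.1 * hcoef (K-A) (K-B) K kl.2) * x ^ n := by
    rw [Finset.sum_mul]
    apply Finset.sum_congr rfl
    intro kl hkl
    have hn : kl.1 + kl.2 = n := Finset.HasAntidiagonal.mem_antidiagonal.mp hkl
    rw [← hn, pow_add]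
    ring
  rw [this]
  congr 1
  have hcoe := congrArg (fun f => PowerSeries.coeff n f) (euler_ps hK A B)
  rw [hps, coeff_mk, PowerSeries.coeff_mul] at hcoe
  rw [hcoe]
  apply Finset.sum_congr rfl
  intro kl _
  rw [bps, hps, coeff_mk, coeff_mk]

lemma hyperg_ge_one {K : ℝ} (hK : 0 < K) {A B : ℝ} (hA : 0 ≤ A) (hB : 0 ≤ B)
    {x : ℝ} (hx0 : 0 ≤ x) (hx : x < 1) : 1 ≤ hyperg A B K x := by
  have hxabs : |x| < 1 := by rw [abs_of_nonneg hx0]; exact hx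
  have hsum : Summable (fun n : ℕ => hcoef A B K n * x ^ n) :=
    (summable_abs_hcoef hK A B hxabs).of_abs
  have hnn : ∀ n : ℕ, 0 ≤ hcoef A B K n * x ^ n := by
    intro n
    apply mul_nonneg
    · exact div_nonneg (mul_nonneg (poch_nonneg hA n) (poch_nonneg hB n))
        (mul_nonneg (le_of_lt (poch_pos hK n)) (Nat.cast_nonneg _))
    · positivity
  have h0 : hcoef A B K 0 * x ^ 0 = 1 := by rw [hcoef_zero]; norm_num
  rw [hyperg_eq_tsum]
  calc (1:ℝ) = hcoef A B K 0 * x ^ 0 := h0.symm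
    _ ≤ ∑' n : ℕ, hcoef A B K n * x ^ n := Summable.le_tsum hsum 0 fun j _ => hnn j

lemma hyperg_pos {K A B : ℝ} (hK : 0 < K) (hA : A ≤ K) (hB : B ≤ K)
    {x : ℝ} (hx0 : 0 ≤ x) (hx : x < 1) : 0 < hyperg A B K x := by
  rw [euler_fun hK A B hx0 hx]
  have h1 : (0:ℝ) < 1 - x := by linarith
  have h2 := hyperg_ge_one hK (by linarith : (0:ℝ) ≤ K - A) (by linarith : (0:ℝ) ≤ K - B) hx0 hx
  have h3 : (0:ℝ) < (1 - x) ^ (K - A - B) := Real.rpow_pos_of_pos h1 _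
  nlinarith

lemma hyperg_hasDerivAt {K : ℝ} (hK : 0 < K) (A B : ℝ) {x : ℝ} (hx : |x| < 1) :
    HasDerivAt (fun y => hyperg A B K y)
      (A * B / K * hyperg (A + 1) (B + 1) (K + 1) x) x := by
  have h := hasDerivAt_powser (fun n => hcoef_ratio hK A B n) (hcoef_Rlim A B) hx
  have heq : (∑' n : ℕ, ((n:ℝ) + 1) * hcoef A B K (n + 1) * x ^ n)
      = A * B / K * hyperg (A + 1) (B + 1) (K + 1) x := by
    rw [hyperg_eq_tsum, ← tsum_mul_left]
    apply tsum_congr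
    intro n
    have hid : ((n:ℝ) + 1) * hcoef A B K (n + 1) = A * B / K * hcoef (A+1) (B+1) (K+1) n := by
      have hpK : (0:ℝ) < poch K n := poch_pos hK n
      have hpK1 : (0:ℝ) < poch (K+1) n := poch_pos (by linarith) n
      have hKn : (0:ℝ) < K + n := by positivity
      have hfac : (0:ℝ) < (Nat.factorial n : ℝ) := by positivity
      rw [hcoef, hcoef, poch_succ', poch_succ', poch_succ', Nat.factorial_succ]
      push_cast
      field_simp
    rw [hid]
    ring
  rw [← heq]
  exact h

end HypergAux

open HypergAux in
theorem hyperg_monotone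
    (a b c : ℝ) (hc : 0 < c) (hac : a ≤ c) (hbc : b ≤ c) :
    (a * b ≤ 0 → AntitoneOn (fun x : ℝ => hyperg a b c x) (Set.Ioo 0 1)) ∧
    (0 ≤ a * b → MonotoneOn (fun x : ℝ => hyperg a b c x) (Set.Ioo 0 1)) := by
  have hD : ∀ x ∈ Set.Ioo (0:ℝ) 1,
      HasDerivAt (fun y => hyperg a b c y)
        (a * b / c * hyperg (a + 1) (b + 1) (c + 1) x) x := by
    intro x hx
    exact hyperg_hasDerivAt hc a b (by rw [abs_of_pos hx.1]; exact hx.2)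
  have hH : ∀ x ∈ Set.Ioo (0:ℝ) 1, 0 < hyperg (a + 1) (b + 1) (c + 1) x := by
    intro x hx
    exact hyperg_pos (by linarith) (by linarith) (by linarith) (le_of_lt hx.1) hx.2
  have hderiv_eq : ∀ x ∈ Set.Ioo (0:ℝ) 1,
      deriv (fun y => hyperg a b c y) x = a * b / c * hyperg (a + 1) (b + 1) (c + 1) x :=
    fun x hx => (hD x hx).deriv
  have hcont : ContinuousOn (fun y => hyperg a b c y) (Set.Ioo 0 1) :=
    fun x hx => (hD x hx).continuousAt.continuousWithinAt
  have hdiff : DifferentiableOn ℝ (fun y => hyperg a b c y) (interior (Set.Ioo 0 1)) := by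
    rw [interior_Ioo]
    exact fun x hx => (hD x hx).differentiableAt.differentiableWithinAt
  constructor
  · intro hab
    apply antitoneOn_of_deriv_nonpos (convex_Ioo 0 1) hcont hdiff
    intro x hx
    rw [interior_Ioo] at hx
    rw [hderiv_eq x hx]
    have := hH x hx
    have habc : a * b / c ≤ 0 := div_nonpos_of_nonpos_of_nonneg hab (le_of_lt hc)
    exact mul_nonpos_of_nonpos_of_nonneg habc (le_of_lt this)
  · intro hab
    apply monotoneOn_of_deriv_nonneg (convex_Ioo 0 1) hcont hdiff
    intro x hx
    rw [interior_Ioo] at hx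
    rw [hderiv_eq x hx]
    have := hH x hx
    have habc : 0 ≤ a * b / c := div_nonneg hab (le_of_lt hc)
    exact mul_nonneg habc (le_of_lt this)
end
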